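/- arXiv:2205.07492 — 6 statements merged into one kernel-verified Lean document; each statement's English description precedes it below -/
import Mathlib

section
/- Let k ≥ 1, let V be a vector space over ℂ with a basis (v_i) indexed by ℤ/kℤ, and let X, Y be commuting nilpotent linear endomorphisms of V such that for every i ∈ ℤ/kℤ, X v_i lies in the line spanned by v_{i+1} and Y v_i lies in the line spanned by v_{i−1}. Then X ∘ Y = 0. (This is the Proposition that for a nilpotent G-constellation F for the cyclic group G = ℤ/kℤ ⊂ SL(2,ℂ), the endomorphism 'multiplication by xy' is the zero endomorphism.) -/
/-! In the basis `(v i)` the product `X * Y` is diagonal: `Y` moves `v i` into the line of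
`v (i - 1)` and `X` moves it back into the line of `v i`. Since `X` and `Y` commute and `X` is
nilpotent, `X * Y` is nilpotent, so each of its diagonal entries is a nilpotent scalar, hence zero. -/

open Submodule

theorem LinearMap.apply_apply_mem_span_singleton {R M N P : Type*} [CommSemiring R]
    [AddCommMonoid M] [AddCommMonoid N] [AddCommMonoid P] [Module R M] [Module R N] [Module R P]
    {f : N →ₗ[R] P} {g : M →ₗ[R] N} {x : M} {y : N} {z : P}
    (hg : g x ∈ R ∙ y) (hf : f y ∈ R ∙ z) : f (g x) ∈ R ∙ z := by
  obtain ⟨c, hc⟩ := mem_span_singleton.mp hg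
  rw [← hc, map_smul]
  exact smul_mem _ c hf

theorem Module.End.apply_eq_zero_of_isNilpotent_of_mem_span_singleton {R M : Type*} [CommRing R]
    [IsDomain R] [AddCommGroup M] [Module R M] [IsTorsionFree R M] {f : Module.End R M}
    (hf : IsNilpotent f) {x : M} (hx : f x ∈ R ∙ x) : f x = 0 := by
  obtain rfl | hx₀ := eq_or_ne x 0
  · exact map_zero f
  obtain ⟨c, hc⟩ := mem_span_singleton.mp hx
  have hvec : f.HasEigenvector c x := hasEigenvector_iff.mpr ⟨mem_eigenspace_iff.mpr hc.symm, hx₀⟩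
  have hc₀ : c = 0 := ((hasEigenvalue_of_hasEigenvector hvec).isNilpotent_of_isNilpotent hf).eq_zero
  rw [← hc, hc₀, zero_smul]

theorem stmt0_general (k : ℕ) (V : Type*) [AddCommGroup V] [Module ℂ V]
    (v : Module.Basis (ZMod k) ℂ V) (X Y : Module.End ℂ V)
    (hcomm : Commute X Y) (hX : IsNilpotent X)
    (hXv : ∀ i : ZMod k, X (v i) ∈ Submodule.span ℂ {v (i + 1)})
    (hYv : ∀ i : ZMod k, Y (v i) ∈ Submodule.span ℂ {v (i - 1)}) :
    X ∘ₗ Y = (0 : Module.End ℂ V) := by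
  refine v.ext fun i => ?_
  have hXv' : X (v (i - 1)) ∈ ℂ ∙ v i := by simpa using hXv (i - 1)
  have hdiag : X (Y (v i)) ∈ ℂ ∙ v i := LinearMap.apply_apply_mem_span_singleton (hYv i) hXv'
  exact Module.End.apply_eq_zero_of_isNilpotent_of_mem_span_singleton
    (hcomm.isNilpotent_mul_right hX) hdiag

/-- Let `k ≥ 1`, let `V` be a `ℂ`-vector space with a basis `(v i)` indexed by
`ℤ/kℤ`, and let `X`, `Y` be commuting nilpotent linear endomorphisms of `V` such that for every
`i`, `X (v i)` lies in the line spanned by `v (i+1)` and `Y (v i)` lies in the line spanned by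
`v (i-1)`.  Then `X ∘ Y = 0`.  (For a nilpotent `G`-constellation, multiplication by `xy` is the
zero endomorphism.) -/
theorem stmt0 (k : ℕ) (hk : 1 ≤ k) (V : Type*) [AddCommGroup V] [Module ℂ V]
    (v : Module.Basis (ZMod k) ℂ V) (X Y : Module.End ℂ V)
    (hcomm : Commute X Y) (hX : IsNilpotent X) (hY : IsNilpotent Y)
    (hXv : ∀ i : ZMod k, X (v i) ∈ Submodule.span ℂ {v (i + 1)})
    (hYv : ∀ i : ZMod k, Y (v i) ∈ Submodule.span ℂ {v (i - 1)}) :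
    X ∘ₗ Y = (0 : Module.End ℂ V) :=
  stmt0_general k V v X Y hcomm hX hXv hYv
end

section
/- Let A₁, A₂, A₁′, A₂′ ⊆ ℕ × ℕ be Ferrers diagrams such that A₁ ∖ A₂ = A₁′ ∖ A₂′. Then there is an isomorphism of R-modules I_{A₂} / (I_{A₁} ⊓ I_{A₂}) ≅ I_{A₂′} / (I_{A₁′} ⊓ I_{A₂′}). In other words, the isomorphism class of the torus-equivariant R-module attached to a skew Ferrers diagram Γ is independent of the chosen presentation Γ = A₁ ∖ A₂ as a difference of two Ferrers diagrams. -/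
open MvPolynomial

/-- A Ferrers diagram: a subset `A ⊆ ℕ × ℕ` such that the complement is upward closed, i.e.
for all `p ∉ A` and all `q`, `p + q ∉ A`. -/
def IsFerrers (A : Set (ℕ × ℕ)) : Prop :=
  ∀ p ∉ A, ∀ q : ℕ × ℕ, p + q ∉ A

/-- The monomial ideal of `ℂ[x,y]` spanned by the monomials `x^i y^j` with `(i,j) ∉ A`. -/
noncomputable def ferrersIdeal (A : Set (ℕ × ℕ)) : Ideal (MvPolynomial (Fin 2) ℂ) :=
  Ideal.span { m | ∃ p : ℕ × ℕ, p ∉ A ∧ m = X 0 ^ p.1 * X 1 ^ p.2 }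

/-- The `ℂ[x,y]`-module `I_{A₂} / (I_{A₁} ⊓ I_{A₂})` attached to the presentation
`Γ = A₁ ∖ A₂` of a skew Ferrers diagram. -/
abbrev sfdModule (A₁ A₂ : Set (ℕ × ℕ)) : Type :=
  ↥(ferrersIdeal A₂) ⧸
    (Submodule.comap (ferrersIdeal A₂).subtype (ferrersIdeal A₁ ⊓ ferrersIdeal A₂))

namespace SFD

open Classical

abbrev Rxy := MvPolynomial (Fin 2) ℂ

/-- Convert an exponent finsupp on `Fin 2` to a pair of naturals. -/
def toPair (d : Fin 2 →₀ ℕ) : ℕ × ℕ := (d 0, d 1)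

lemma toPair_add (a b : Fin 2 →₀ ℕ) : toPair (a + b) = toPair a + toPair b := by
  simp [toPair, Prod.ext_iff]

lemma pair_monomial (p : ℕ × ℕ) :
    (X 0 ^ p.1 * X 1 ^ p.2 : Rxy) =
      monomial (Finsupp.single 0 p.1 + Finsupp.single 1 p.2) 1 := by
  rw [X_pow_eq_monomial, X_pow_eq_monomial, monomial_mul, one_mul]

lemma toPair_pair (p : ℕ × ℕ) :
    toPair (Finsupp.single 0 p.1 + Finsupp.single 1 p.2) = p := by
  simp [toPair, Finsupp.single_apply, Prod.ext_iff]

lemma monomial_eq_pair (d : Fin 2 →₀ ℕ) :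
    (monomial d (1 : ℂ)) = X 0 ^ (d 0) * X 1 ^ (d 1) := by
  have h : (X 0 ^ (d 0) * X 1 ^ (d 1) : Rxy)
      = monomial (Finsupp.single 0 (d 0) + Finsupp.single 1 (d 1)) 1 :=
    pair_monomial (d 0, d 1)
  have hd : d = Finsupp.single 0 (d 0) + Finsupp.single 1 (d 1) := by
    ext i
    fin_cases i <;> simp [Finsupp.single_apply]
  rw [h]
  exact congrArg (fun e => monomial e (1 : ℂ)) hd

/-- Sufficient condition for membership in a Ferrers ideal: all monomials of `f` have
exponent pairs outside `A`. -/
lemma mem_ferrersIdeal_of_support {A : Set (ℕ × ℕ)} {f : Rxy}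
    (h : ∀ d, coeff d f ≠ 0 → toPair d ∉ A) : f ∈ ferrersIdeal A := by
  rw [← support_sum_monomial_coeff f]
  refine Ideal.sum_mem _ fun d hd => ?_
  have h1 : (monomial d (coeff d f) : Rxy)
      = C (coeff d f) * (X 0 ^ (d 0) * X 1 ^ (d 1)) := by
    rw [← monomial_eq_pair, C_mul_monomial, mul_one]
  rw [h1]
  exact Ideal.mul_mem_left _ _
    (Ideal.subset_span ⟨toPair d, h d (mem_support_iff.mp hd), rfl⟩)

/-- The ideal of polynomials all of whose monomials lie outside a Ferrers diagram `A`. -/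
noncomputable def supportIdeal (A : Set (ℕ × ℕ)) (hA : IsFerrers A) : Ideal Rxy where
  carrier := {f | ∀ d, coeff d f ≠ 0 → toPair d ∉ A}
  zero_mem' := by intro d hd; simp at hd
  add_mem' := by
    intro a b ha hb d hd
    by_cases h : coeff d a ≠ 0
    · exact ha d h
    · push_neg at h
      refine hb d fun h0 => hd ?_
      rw [coeff_add, h, h0, add_zero]
  smul_mem' := by
    intro r f hf d hd
    rw [smul_eq_mul] at hd
    obtain ⟨a, ha, b, hb, rfl⟩ :=
      Finset.mem_add.mp (MvPolynomial.support_mul r f (mem_support_iff.mpr hd))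
    rw [toPair_add, add_comm (toPair a) (toPair b)]
    exact hA _ (hf b (mem_support_iff.mp hb)) _

/-- Necessary condition: members of a Ferrers ideal have all monomial exponents outside `A`. -/
lemma support_of_mem_ferrersIdeal {A : Set (ℕ × ℕ)} (hA : IsFerrers A) {f : Rxy}
    (hf : f ∈ ferrersIdeal A) : ∀ d, coeff d f ≠ 0 → toPair d ∉ A := by
  have hle : ferrersIdeal A ≤ supportIdeal A hA := by
    rw [ferrersIdeal, Ideal.span_le]
    rintro m ⟨p, hp, rfl⟩
    intro d hd
    rw [pair_monomial, coeff_monomial] at hd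
    by_cases he : Finsupp.single 0 p.1 + Finsupp.single 1 p.2 = d
    · rw [← he, toPair_pair]; exact hp
    · rw [if_neg he] at hd; exact absurd rfl hd
  exact hle hf

/-- Truncation of a polynomial to monomials with exponent pair in `Γ`. -/
noncomputable def trunc (Γ : Set (ℕ × ℕ)) (f : Rxy) : Rxy :=
  ∑ d ∈ f.support, if toPair d ∈ Γ then monomial d (coeff d f) else 0

lemma coeff_trunc (Γ : Set (ℕ × ℕ)) (f : Rxy) (e : Fin 2 →₀ ℕ) :
    coeff e (trunc Γ f) = if toPair e ∈ Γ then coeff e f else 0 := by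
  rw [trunc, coeff_sum]
  have h : ∀ d ∈ f.support,
      coeff e (if toPair d ∈ Γ then (monomial d (coeff d f) : Rxy) else 0)
        = if d = e then (if toPair e ∈ Γ then coeff e f else 0) else 0 := by
    intro d _
    by_cases h : d = e
    · subst h; by_cases hg : toPair d ∈ Γ <;> simp [hg, coeff_monomial]
    · by_cases hg : toPair d ∈ Γ <;> simp [hg, coeff_monomial, h]
  rw [Finset.sum_congr rfl h, Finset.sum_ite_eq' f.support e]
  by_cases he : e ∈ f.support
  · rw [if_pos he]
  · rw [if_neg he, notMem_support_iff.mp he]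
    simp

lemma trunc_add (Γ : Set (ℕ × ℕ)) (f g : Rxy) :
    trunc Γ (f + g) = trunc Γ f + trunc Γ g := by
  apply MvPolynomial.ext
  intro e
  rw [coeff_add, coeff_trunc, coeff_trunc, coeff_trunc, coeff_add]
  split <;> simp

lemma trunc_trunc (Γ : Set (ℕ × ℕ)) (f : Rxy) : trunc Γ (trunc Γ f) = trunc Γ f := by
  apply MvPolynomial.ext
  intro e
  rw [coeff_trunc, coeff_trunc]
  split <;> simp_all

lemma trunc_eq_zero {Γ : Set (ℕ × ℕ)} {f : Rxy}
    (h : ∀ d, coeff d f ≠ 0 → toPair d ∉ Γ) : trunc Γ f = 0 := by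
  apply MvPolynomial.ext
  intro e
  rw [coeff_trunc, coeff_zero]
  split
  · next hg =>
    by_contra h0
    exact h e h0 hg
  · rfl

lemma coeff_trunc_support {Γ : Set (ℕ × ℕ)} {f : Rxy} {d : Fin 2 →₀ ℕ}
    (h : coeff d (trunc Γ f) ≠ 0) : toPair d ∈ Γ ∧ coeff d f ≠ 0 := by
  rw [coeff_trunc] at h
  by_cases hg : toPair d ∈ Γ
  · exact ⟨hg, by simpa [hg] using h⟩
  · simp [hg] at h

/-- `f - trunc Γ f` lies in `I_{A₁} ⊓ I_{A₂}` whenever `f ∈ I_{A₂}` and `Γ = A₁ \ A₂`. -/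
lemma sub_trunc_mem {A₁ A₂ : Set (ℕ × ℕ)} (h₂ : IsFerrers A₂) {f : Rxy}
    (hf : f ∈ ferrersIdeal A₂) :
    f - trunc (A₁ \ A₂) f ∈ ferrersIdeal A₁ ⊓ ferrersIdeal A₂ := by
  have hs := support_of_mem_ferrersIdeal h₂ hf
  have key : ∀ d, coeff d (f - trunc (A₁ \ A₂) f) ≠ 0 →
      toPair d ∉ A₁ ∧ toPair d ∉ A₂ := by
    intro d hd
    rw [coeff_sub, coeff_trunc] at hd
    by_cases hg : toPair d ∈ A₁ \ A₂
    · simp [hg] at hd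
    · have hcf : coeff d f ≠ 0 := by
        intro h0; apply hd; rw [if_neg hg, h0, sub_zero]
      have h2 := hs d hcf
      exact ⟨fun h1 => hg ⟨h1, h2⟩, h2⟩
  exact Submodule.mem_inf.mpr
    ⟨mem_ferrersIdeal_of_support fun d hd => (key d hd).1,
     mem_ferrersIdeal_of_support fun d hd => (key d hd).2⟩

/-- Key computation: truncation is `R`-linear modulo `I_{A₁'} ⊓ I_{A₂'}`. -/
lemma key_smul {A₁ A₂ A₁' A₂' : Set (ℕ × ℕ)}
    (h₁ : IsFerrers A₁) (h₂ : IsFerrers A₂) (h₂' : IsFerrers A₂')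
    (hΓ : A₁ \ A₂ = A₁' \ A₂') (r : Rxy) {f : Rxy} (hf : f ∈ ferrersIdeal A₂) :
    trunc (A₁ \ A₂) (r * f) - r * trunc (A₁ \ A₂) f
      ∈ ferrersIdeal A₁' ⊓ ferrersIdeal A₂' := by
  set Γ := A₁ \ A₂ with hΓdef
  set u := trunc Γ f with hu
  set v := f - u with hv
  have hsf := support_of_mem_ferrersIdeal h₂ hf
  have ha : ∀ d, coeff d u ≠ 0 → toPair d ∈ Γ := fun d hd => (coeff_trunc_support hd).1
  have hb : ∀ d, coeff d v ≠ 0 → toPair d ∉ A₁ ∧ toPair d ∉ A₂ := by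
    intro d hd
    rw [hv, coeff_sub, hu, coeff_trunc] at hd
    by_cases hg : toPair d ∈ Γ
    · simp [hg] at hd
    · have hcf : coeff d f ≠ 0 := by
        intro h0; apply hd; rw [if_neg hg, h0, sub_zero]
      have h2 := hsf d hcf
      exact ⟨fun h1 => hg ⟨h1, h2⟩, h2⟩
  have hc : ∀ d, coeff d (r * v) ≠ 0 → toPair d ∉ A₁ ∧ toPair d ∉ A₂ := by
    intro d hd
    obtain ⟨a, hA, b, hB, rfl⟩ :=
      Finset.mem_add.mp (MvPolynomial.support_mul r v (mem_support_iff.mpr hd))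
    obtain ⟨hb1, hb2⟩ := hb b (mem_support_iff.mp hB)
    rw [toPair_add, add_comm (toPair a) (toPair b)]
    exact ⟨h₁ _ hb1 _, h₂ _ hb2 _⟩
  have hdlem : ∀ d, coeff d (r * u) ≠ 0 → toPair d ∉ A₂ ∧ toPair d ∉ A₂' := by
    intro d hd
    obtain ⟨a, hA, b, hB, rfl⟩ :=
      Finset.mem_add.mp (MvPolynomial.support_mul r u (mem_support_iff.mpr hd))
    have hbΓ := ha b (mem_support_iff.mp hB)
    have hb2 : toPair b ∉ A₂ := hbΓ.2
    have hbΓ' : toPair b ∈ A₁' \ A₂' := by rw [← hΓ]; exact hbΓ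
    have hb2' : toPair b ∉ A₂' := hbΓ'.2
    rw [toPair_add, add_comm (toPair a) (toPair b)]
    exact ⟨h₂ _ hb2 _, h₂' _ hb2' _⟩
  have key : ∀ d, coeff d (trunc Γ (r * f) - r * u) ≠ 0 →
      toPair d ∉ A₁' ∧ toPair d ∉ A₂' := by
    intro d hd
    have hrf : r * f = r * u + r * v := by rw [hv]; ring
    by_cases hg : toPair d ∈ Γ
    · exfalso
      have hcv : coeff d (r * v) = 0 := by
        by_contra h
        exact (hc d h).1 hg.1
      apply hd
      rw [coeff_sub, coeff_trunc, if_pos hg, hrf, coeff_add, hcv, add_zero, sub_self]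
    · have hru : coeff d (r * u) ≠ 0 := by
        intro h0; apply hd
        rw [coeff_sub, coeff_trunc, if_neg hg, h0, sub_zero]
      obtain ⟨hd2, hd2'⟩ := hdlem d hru
      have hdΓ' : toPair d ∉ A₁' \ A₂' := by rw [← hΓ]; exact hg
      exact ⟨fun h1 => hdΓ' ⟨h1, hd2'⟩, hd2'⟩
  exact Submodule.mem_inf.mpr
    ⟨mem_ferrersIdeal_of_support fun d hd => (key d hd).1,
     mem_ferrersIdeal_of_support fun d hd => (key d hd).2⟩

lemma trunc_mem_ferrersIdeal {A₁ A₂ A₁' A₂' : Set (ℕ × ℕ)}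
    (hΓ : A₁ \ A₂ = A₁' \ A₂') (f : Rxy) :
    trunc (A₁ \ A₂) f ∈ ferrersIdeal A₂' :=
  mem_ferrersIdeal_of_support fun d hd => by
    have h := (coeff_trunc_support hd).1
    rw [hΓ] at h
    exact h.2

variable {A₁ A₂ A₁' A₂' : Set (ℕ × ℕ)}

/-- The truncation map `I_{A₂} → I_{A₂'}/(I_{A₁'} ⊓ I_{A₂'})`. -/
noncomputable def psi (h₁ : IsFerrers A₁) (h₂ : IsFerrers A₂) (h₂' : IsFerrers A₂')
    (hΓ : A₁ \ A₂ = A₁' \ A₂') :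
    ↥(ferrersIdeal A₂) →ₗ[Rxy] sfdModule A₁' A₂' where
  toFun f := Submodule.Quotient.mk ⟨trunc (A₁ \ A₂) f.1, trunc_mem_ferrersIdeal hΓ f.1⟩
  map_add' := by
    intro a b
    rw [← Submodule.Quotient.mk_add]
    exact congrArg _ (Subtype.ext (trunc_add _ a.1 b.1))
  map_smul' := by
    intro r f
    rw [RingHom.id_apply, ← Submodule.Quotient.mk_smul, Submodule.Quotient.eq]
    rw [Submodule.mem_comap]
    have : ((⟨trunc (A₁ \ A₂) ((r • f : ↥(ferrersIdeal A₂)) : Rxy),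
        trunc_mem_ferrersIdeal hΓ _⟩ -
        r • ⟨trunc (A₁ \ A₂) (f : Rxy), trunc_mem_ferrersIdeal hΓ _⟩ :
        ↥(ferrersIdeal A₂')) : Rxy)
        = trunc (A₁ \ A₂) (r * (f : Rxy)) - r * trunc (A₁ \ A₂) (f : Rxy) := by
      simp [smul_eq_mul]
    rw [Submodule.coe_subtype, this]
    exact key_smul h₁ h₂ h₂' hΓ r f.2

lemma psi_apply (h₁ : IsFerrers A₁) (h₂ : IsFerrers A₂) (h₂' : IsFerrers A₂')
    (hΓ : A₁ \ A₂ = A₁' \ A₂') (f : ↥(ferrersIdeal A₂)) :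
    psi h₁ h₂ h₂' hΓ f =
      Submodule.Quotient.mk ⟨trunc (A₁ \ A₂) f.1, trunc_mem_ferrersIdeal hΓ f.1⟩ := rfl

lemma psi_ker (h₁ : IsFerrers A₁) (h₂ : IsFerrers A₂) (h₂' : IsFerrers A₂')
    (hΓ : A₁ \ A₂ = A₁' \ A₂') :
    Submodule.comap (ferrersIdeal A₂).subtype (ferrersIdeal A₁ ⊓ ferrersIdeal A₂)
      ≤ LinearMap.ker (psi h₁ h₂ h₂' hΓ) := by
  rintro ⟨f, hf⟩ hmem
  rw [Submodule.mem_comap, Submodule.coe_subtype, Submodule.mem_inf] at hmem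
  rw [LinearMap.mem_ker, psi_apply, Submodule.Quotient.mk_eq_zero]
  have h1 := support_of_mem_ferrersIdeal h₁ hmem.1
  have h2 := support_of_mem_ferrersIdeal h₂ hmem.2
  have ht : trunc (A₁ \ A₂) f = 0 :=
    trunc_eq_zero fun d hd hg => h1 d hd hg.1
  rw [Submodule.mem_comap]
  show trunc (A₁ \ A₂) f ∈ _
  rw [ht]
  exact Submodule.zero_mem _

/-- The induced map on quotients. -/
noncomputable def Psi (h₁ : IsFerrers A₁) (h₂ : IsFerrers A₂) (h₂' : IsFerrers A₂')
    (hΓ : A₁ \ A₂ = A₁' \ A₂') :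
    sfdModule A₁ A₂ →ₗ[Rxy] sfdModule A₁' A₂' :=
  Submodule.liftQ _ (psi h₁ h₂ h₂' hΓ) (psi_ker h₁ h₂ h₂' hΓ)

lemma Psi_comp (h₁ : IsFerrers A₁) (h₂ : IsFerrers A₂)
    (h₁' : IsFerrers A₁') (h₂' : IsFerrers A₂') (hΓ : A₁ \ A₂ = A₁' \ A₂') :
    (Psi h₁' h₂' h₂ hΓ.symm).comp (Psi h₁ h₂ h₂' hΓ) = LinearMap.id := by
  refine Submodule.linearMap_qext _ (LinearMap.ext fun x => ?_)
  obtain ⟨f, hf⟩ := x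
  simp only [LinearMap.comp_apply, Submodule.mkQ_apply, LinearMap.id_apply, Psi,
    Submodule.liftQ_apply, psi_apply]
  rw [Submodule.Quotient.eq, Submodule.mem_comap, Submodule.coe_subtype]
  have h1 : trunc (A₁' \ A₂') (trunc (A₁ \ A₂) f) = trunc (A₁ \ A₂) f := by
    rw [← hΓ, trunc_trunc]
  show (⟨trunc (A₁' \ A₂') (trunc (A₁ \ A₂) f), _⟩ - ⟨f, hf⟩ : ↥(ferrersIdeal A₂)).1 ∈ _
  rw [Submodule.coe_sub]
  show trunc (A₁' \ A₂') (trunc (A₁ \ A₂) f) - f ∈ _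
  rw [h1]
  have := sub_trunc_mem (A₁ := A₁) h₂ hf
  have hneg := Submodule.neg_mem _ this
  rw [neg_sub] at hneg
  exact hneg

end SFD

/-- If `A₁ ∖ A₂ = A₁′ ∖ A₂′` for Ferrers diagrams `A₁, A₂, A₁′, A₂′`, then
`I_{A₂} / (I_{A₁} ⊓ I_{A₂}) ≅ I_{A₂′} / (I_{A₁′} ⊓ I_{A₂′})` as `ℂ[x,y]`-modules: the module
attached to a skew Ferrers diagram is independent of the chosen presentation. -/
theorem stmt1 (A₁ A₂ A₁' A₂' : Set (ℕ × ℕ))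
    (h₁ : IsFerrers A₁) (h₂ : IsFerrers A₂) (h₁' : IsFerrers A₁') (h₂' : IsFerrers A₂')
    (hΓ : A₁ \ A₂ = A₁' \ A₂') :
    Nonempty (sfdModule A₁ A₂ ≃ₗ[MvPolynomial (Fin 2) ℂ] sfdModule A₁' A₂') := by
  exact ⟨LinearEquiv.ofLinear (SFD.Psi h₁ h₂ h₂' hΓ) (SFD.Psi h₁' h₂' h₂ hΓ.symm)
    (SFD.Psi_comp h₁' h₂' h₁ h₂ hΓ.symm) (SFD.Psi_comp h₁ h₂ h₁' h₂' hΓ)⟩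
end

section
/- Let A₁, A₂, A₁′, A₂′ ⊆ ℕ × ℕ be Ferrers diagrams and let (u, v) ∈ ℕ × ℕ be such that A₁′ ∖ A₂′ = { (i+u, j+v) : (i,j) ∈ A₁ ∖ A₂ }, i.e. the skew Ferrers diagram A₁′ ∖ A₂′ is the translate of A₁ ∖ A₂ by (u, v). Then the R-modules I_{A₂} / (I_{A₁} ⊓ I_{A₂}) and I_{A₂′} / (I_{A₁′} ⊓ I_{A₂′}) are isomorphic. (In particular, translating a skew Ferrers diagram by (k,0), by (0,k), or by (1,1) — multiplication by x^k, y^k, or xy in the representation tableau — does not change the isomorphism class of the attached ℂ[x,y]-module; this is the module-theoretic content of the periodicity Remark.) -/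
open MvPolynomial

/-! Multiplication by `x^u y^v` maps `I_{A₂}` into `I_{B₂}` and induces
`I_{A₂} / (I_{A₁} ⊓ I_{A₂}) ≅ I_{B₂} / (I_{B₁} ⊓ I_{B₂})` as soon as, for `q ∉ A₂`, the translate
`q + (u, v)` avoids `B₂` and lies in `B₁` iff `q ∈ A₁`, and every point of `B₁ ∖ B₂` is such a
translate. The given presentation `(A₁', A₂')` need not satisfy this (`A₂'` may contain translates
of points outside `A₁`), but the canonical presentation `(lowerClosure Γ, lowerClosure Γ ∖ Γ)` of
`Γ = A₁' ∖ A₂'` does, both for `(A₁, A₂)` with shift `(u, v)` and for `(A₁', A₂')` with shift `0`. -/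

lemma isFerrers_iff_isLowerSet {A : Set (ℕ × ℕ)} : IsFerrers A ↔ IsLowerSet A := by
  refine ⟨fun h a b hba ha => ?_, fun h p hp q hpq => hp (h le_self_add hpq)⟩
  obtain ⟨c, rfl⟩ := exists_add_of_le hba
  by_contra hb
  exact h b hb c ha

noncomputable def xyPow (p : ℕ × ℕ) : MvPolynomial (Fin 2) ℂ := X 0 ^ p.1 * X 1 ^ p.2

lemma xyPow_add (p q : ℕ × ℕ) : xyPow (p + q) = xyPow p * xyPow q := by
  simp only [xyPow, Prod.fst_add, Prod.snd_add, pow_add]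
  ring

lemma xyPow_eq_monomial (p : ℕ × ℕ) :
    xyPow p = monomial (Finsupp.single 0 p.1 + Finsupp.single 1 p.2) 1 := by
  rw [xyPow, X_pow_eq_monomial, X_pow_eq_monomial, monomial_mul, one_mul]

lemma xyPow_mem_ferrersIdeal {A : Set (ℕ × ℕ)} {p : ℕ × ℕ} (hp : p ∉ A) :
    xyPow p ∈ ferrersIdeal A :=
  Ideal.subset_span ⟨p, hp, rfl⟩

lemma ferrersIdeal_eq_span_monomial (A : Set (ℕ × ℕ)) :
    ferrersIdeal A =
      Ideal.span ((fun d => monomial d 1) '' {d : Fin 2 →₀ ℕ | (d 0, d 1) ∉ A}) := by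
  refine congrArg Ideal.span (Set.ext fun m => ⟨?_, ?_⟩)
  · rintro ⟨p, hp, rfl⟩
    exact ⟨_, by simpa using hp, (xyPow_eq_monomial p).symm⟩
  · rintro ⟨d, hd, rfl⟩
    have hd' : Finsupp.single 0 (d 0) + Finsupp.single 1 (d 1) = d := by
      ext i
      fin_cases i <;> simp
    exact ⟨(d 0, d 1), hd, by rw [← xyPow, xyPow_eq_monomial, hd']⟩

lemma mem_ferrersIdeal_iff {A : Set (ℕ × ℕ)} (hA : IsLowerSet A) {f : MvPolynomial (Fin 2) ℂ} :
    f ∈ ferrersIdeal A ↔ ∀ d ∈ f.support, (d 0, d 1) ∉ A := by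
  rw [ferrersIdeal_eq_span_monomial, mem_ideal_span_monomial_image]
  refine forall₂_congr fun d _ => ⟨?_, fun hd => ⟨d, hd, le_rfl⟩⟩
  rintro ⟨s, hs, hsd⟩ hdA
  exact hs (hA (Prod.mk_le_mk.2 ⟨hsd 0, hsd 1⟩) hdA)

lemma xyPow_mul_mem_ferrersIdeal {A B : Set (ℕ × ℕ)} {e : ℕ × ℕ} (h : ∀ q ∉ A, q + e ∉ B)
    {f : MvPolynomial (Fin 2) ℂ} (hf : f ∈ ferrersIdeal A) : xyPow e * f ∈ ferrersIdeal B := by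
  suffices ferrersIdeal A ≤
      Submodule.comap (LinearMap.mulLeft (MvPolynomial (Fin 2) ℂ) (xyPow e)) (ferrersIdeal B) from
    this hf
  refine Ideal.span_le.2 ?_
  rintro _ ⟨q, hq, rfl⟩
  change xyPow e * xyPow q ∈ ferrersIdeal B
  rw [← xyPow_add, add_comm]
  exact xyPow_mem_ferrersIdeal (h q hq)

lemma xyPow_mul_mem_ferrersIdeal_iff {A₁ A₂ B : Set (ℕ × ℕ)} {e : ℕ × ℕ}
    (hA₁ : IsLowerSet A₁) (hA₂ : IsLowerSet A₂) (hB : IsLowerSet B)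
    (h : ∀ q ∉ A₂, q + e ∈ B ↔ q ∈ A₁) {f : MvPolynomial (Fin 2) ℂ} (hf : f ∈ ferrersIdeal A₂) :
    xyPow e * f ∈ ferrersIdeal B ↔ f ∈ ferrersIdeal A₁ := by
  have hsupp : (xyPow e * f).support =
      f.support.map (addLeftEmbedding (Finsupp.single 0 e.1 + Finsupp.single 1 e.2)) := by
    rw [xyPow_eq_monomial]
    exact AddMonoidAlgebra.support_coeff_single_mul f 1 (by simp) _
  rw [mem_ferrersIdeal_iff hB, mem_ferrersIdeal_iff hA₁, hsupp, Finset.forall_mem_map]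
  refine forall₂_congr fun d hd => not_congr ?_
  convert h _ ((mem_ferrersIdeal_iff hA₂).1 hf d hd) using 2
  ext <;> simp [add_comm]

section Translation

variable {A₁ A₂ B₁ B₂ : Set (ℕ × ℕ)} {e : ℕ × ℕ}

noncomputable def sfdTranslationMap (B₁ : Set (ℕ × ℕ)) (hB₂ : ∀ q ∉ A₂, q + e ∉ B₂) :
    ferrersIdeal A₂ →ₗ[MvPolynomial (Fin 2) ℂ] sfdModule B₁ B₂ :=
  Submodule.mkQ _ ∘ₗ
    (LinearMap.mulLeft _ (xyPow e)).restrict fun _ => xyPow_mul_mem_ferrersIdeal hB₂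

lemma sfdTranslationMap_apply (hB₂ : ∀ q ∉ A₂, q + e ∉ B₂) (f : ferrersIdeal A₂) :
    sfdTranslationMap B₁ hB₂ f =
      Submodule.Quotient.mk ⟨xyPow e * f, xyPow_mul_mem_ferrersIdeal hB₂ f.2⟩ :=
  rfl

lemma sfdTranslationMap_surjective (hB₂ : ∀ q ∉ A₂, q + e ∉ B₂)
    (hsurj : ∀ p ∈ B₁, p ∉ B₂ → ∃ q ∉ A₂, q + e = p) :
    Function.Surjective (sfdTranslationMap B₁ hB₂) := by
  have hgen : ∀ p (hp : p ∉ B₂), Submodule.Quotient.mk ⟨xyPow p, xyPow_mem_ferrersIdeal hp⟩ ∈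
      LinearMap.range (sfdTranslationMap B₁ hB₂) := by
    intro p hp
    by_cases hpB₁ : p ∈ B₁
    · obtain ⟨q, hq, rfl⟩ := hsurj p hpB₁ hp
      refine ⟨⟨xyPow q, xyPow_mem_ferrersIdeal hq⟩, ?_⟩
      simp only [sfdTranslationMap_apply, add_comm q, xyPow_add]
    · convert zero_mem (LinearMap.range (sfdTranslationMap B₁ hB₂))
      exact (Submodule.Quotient.mk_eq_zero _).2
        ⟨xyPow_mem_ferrersIdeal hpB₁, xyPow_mem_ferrersIdeal hp⟩
  rw [← LinearMap.range_eq_top, eq_top_iff]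
  rintro y -
  obtain ⟨⟨f, hf⟩, rfl⟩ := Submodule.Quotient.mk_surjective _ y
  induction hf using Submodule.span_induction with
  | mem g hg =>
    obtain ⟨p, hp, rfl⟩ := hg
    exact hgen p hp
  | zero => exact zero_mem _
  | add x y _ _ hx hy => exact add_mem hx hy
  | smul a x _ hx => exact Submodule.smul_mem _ a hx

lemma ker_sfdTranslationMap (hA₁ : IsLowerSet A₁) (hA₂ : IsLowerSet A₂) (hB₁ : IsLowerSet B₁)
    (hmem : ∀ q ∉ A₂, q + e ∈ B₁ ↔ q ∈ A₁) (hB₂ : ∀ q ∉ A₂, q + e ∉ B₂) :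
    LinearMap.ker (sfdTranslationMap B₁ hB₂) =
      Submodule.comap (ferrersIdeal A₂).subtype (ferrersIdeal A₁ ⊓ ferrersIdeal A₂) := by
  ext ⟨f, hf⟩
  rw [LinearMap.mem_ker, sfdTranslationMap_apply, Submodule.Quotient.mk_eq_zero]
  simp only [Submodule.mem_comap, Submodule.coe_subtype, Submodule.mem_inf,
    xyPow_mul_mem_ferrersIdeal_iff hA₁ hA₂ hB₁ hmem hf, xyPow_mul_mem_ferrersIdeal hB₂ hf, hf]

theorem nonempty_linearEquiv_sfdModule (hA₁ : IsLowerSet A₁) (hA₂ : IsLowerSet A₂)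
    (hB₁ : IsLowerSet B₁) (hmem : ∀ q ∉ A₂, q + e ∈ B₁ ↔ q ∈ A₁) (hB₂ : ∀ q ∉ A₂, q + e ∉ B₂)
    (hsurj : ∀ p ∈ B₁, p ∉ B₂ → ∃ q ∉ A₂, q + e = p) :
    Nonempty (sfdModule A₁ A₂ ≃ₗ[MvPolynomial (Fin 2) ℂ] sfdModule B₁ B₂) :=
  ⟨(Submodule.quotEquivOfEq _ _ (ker_sfdTranslationMap hA₁ hA₂ hB₁ hmem hB₂).symm).trans
    ((sfdTranslationMap B₁ hB₂).quotKerEquivOfSurjective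
      (sfdTranslationMap_surjective hB₂ hsurj))⟩

end Translation

theorem nonempty_linearEquiv_sfdModule_lowerClosure {A₁ A₂ Γ : Set (ℕ × ℕ)} (e : ℕ × ℕ)
    (hA₁ : IsLowerSet A₁) (hA₂ : IsLowerSet A₂) (hΓ : (· + e) '' (A₁ \ A₂) = Γ) :
    Nonempty (sfdModule A₁ A₂ ≃ₗ[MvPolynomial (Fin 2) ℂ]
      sfdModule (lowerClosure Γ) (lowerClosure Γ \ Γ)) := by
  subst hΓ
  have hmem : ∀ q ∉ A₂, q + e ∈ lowerClosure ((· + e) '' (A₁ \ A₂)) ↔ q ∈ A₁ := by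
    refine fun q hq => ⟨?_, fun hq₁ => subset_lowerClosure ⟨q, ⟨hq₁, hq⟩, rfl⟩⟩
    rintro ⟨_, ⟨b, ⟨hb₁, -⟩, rfl⟩, hle⟩
    exact hA₁ (le_of_add_le_add_right hle) hb₁
  refine nonempty_linearEquiv_sfdModule hA₁ hA₂ (lowerClosure _).lower hmem ?_ ?_
  · rintro q hq ⟨hqe, hqΓ⟩
    exact hqΓ ⟨q, ⟨(hmem q hq).1 hqe, hq⟩, rfl⟩
  · intro p hp₁ hp
    obtain ⟨q, ⟨-, hq⟩, rfl⟩ : p ∈ (· + e) '' (A₁ \ A₂) := by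
      by_contra hpΓ
      exact hp ⟨hp₁, hpΓ⟩
    exact ⟨q, hq, rfl⟩

/-- If the skew Ferrers diagram `A₁′ ∖ A₂′` is the translate of `A₁ ∖ A₂`
by a vector `(u,v) ∈ ℕ × ℕ`, then the attached `ℂ[x,y]`-modules are isomorphic.  In particular
translating by `(k,0)`, `(0,k)` or `(1,1)` (multiplication by `x^k`, `y^k` or `xy` in the
representation tableau) does not change the isomorphism class of the attached module. -/
theorem stmt2 (A₁ A₂ A₁' A₂' : Set (ℕ × ℕ)) (u v : ℕ)
    (h₁ : IsFerrers A₁) (h₂ : IsFerrers A₂) (h₁' : IsFerrers A₁') (h₂' : IsFerrers A₂')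
    (hΓ : A₁' \ A₂' = (fun p : ℕ × ℕ => p + (u, v)) '' (A₁ \ A₂)) :
    Nonempty (sfdModule A₁ A₂ ≃ₗ[MvPolynomial (Fin 2) ℂ] sfdModule A₁' A₂') := by
  simp only [isFerrers_iff_isLowerSet] at h₁ h₂ h₁' h₂'
  obtain ⟨E⟩ := nonempty_linearEquiv_sfdModule_lowerClosure (u, v) h₁ h₂ hΓ.symm
  obtain ⟨E'⟩ := nonempty_linearEquiv_sfdModule_lowerClosure (Γ := A₁' \ A₂') 0 h₁' h₂'
    (by simp only [add_zero, Set.image_id'])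
  exact ⟨E.trans E'.symm⟩
end

section
/- For every integer k ≥ 2, 1 + Σ_{r=2}^{⌊(k+1)/2⌋} Σ_{j=0}^{k−2r+1} C(k−2−j, 2r−3) = 2^{k−2}. (This is the identity established in the proof of the Theorem counting simple chambers: summing over the number r of generators and the tail cardinality j, the number C(k−2−j, 2r−3) of arrangements of the remaining boxes gives 2^{k−2}, whence, together with the k choices of first generator, there are exactly k·2^{k−2} simple chambers.) -/
/-!
By the hockey-stick identity the inner sum over `j` is `C(k-1, 2r-2)`, so the left-hand side is
the sum of the even-index entries of row `k-1` of Pascal's triangle. Pascal's rule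
`C(n+1, 2s) = C(n, 2s-1) + C(n, 2s)` turns that into the full row sum `2^(k-2)` of row `k-2`.
-/

open Finset

namespace Nat

theorem sum_Icc_sub_choose {n k : ℕ} (h : k ≤ n) :
    ∑ j ∈ Icc 0 (n - k), (n - j).choose k = (n + 1).choose (k + 1) := by
  rw [← Ico_add_one_right_eq_Icc, sum_Ico_reflect (·.choose k) _ (by omega), ← sum_Icc_choose]
  congr 1
  rw [← Ico_add_one_right_eq_Icc]
  congr 1
  omega

theorem sum_range_choose_two_mul (n m : ℕ) :
    ∑ s ∈ range (m + 1), (n + 1).choose (2 * s) = ∑ i ∈ range (2 * m + 1), n.choose i := by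
  induction m with
  | zero => simp
  | succ m ih =>
    rw [sum_range_succ, ih, show 2 * (m + 1) = 2 * m + 1 + 1 by ring, choose_succ_succ']
    simp only [sum_range_succ]
    ring

theorem sum_range_choose_two_mul_of_le {n m : ℕ} (h : n ≤ 2 * m) :
    ∑ s ∈ range (m + 1), (n + 1).choose (2 * s) = 2 ^ n := by
  rw [sum_range_choose_two_mul, ← sum_range_choose]
  refine (sum_subset (range_subset_range.2 (by omega)) fun i _ hi ↦ ?_).symm
  exact choose_eq_zero_of_lt (by simpa using hi)

end Nat

/-- For every integer `k ≥ 2`,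
`1 + Σ_{r=2}^{⌊(k+1)/2⌋} Σ_{j=0}^{k-2r+1} C(k-2-j, 2r-3) = 2^{k-2}`.
This is the identity from the proof of the theorem counting simple chambers: together with
the `k` choices of first generator it shows there are exactly `k·2^{k-2}` simple chambers. -/
theorem stmt8 (k : ℕ) (hk : 2 ≤ k) :
    1 + ∑ r ∈ Finset.Icc 2 ((k + 1) / 2), ∑ j ∈ Finset.Icc 0 (k + 1 - 2 * r),
      Nat.choose (k - 2 - j) (2 * r - 3) = 2 ^ (k - 2) := by
  obtain ⟨n, rfl⟩ : ∃ n, k = n + 2 := ⟨k - 2, by omega⟩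
  have inner : ∀ r ∈ Icc 2 ((n + 2 + 1) / 2), ∑ j ∈ Icc 0 (n + 2 + 1 - 2 * r),
      (n + 2 - 2 - j).choose (2 * r - 3) = (n + 1).choose (2 * (r - 2 + 1)) := by
    intro r hr
    have hr := mem_Icc.1 hr
    rw [show n + 2 + 1 - 2 * r = n - (2 * r - 3) by omega, Nat.add_sub_cancel,
      Nat.sum_Icc_sub_choose (by omega)]
    congr 1
    omega
  rw [sum_congr rfl inner, ← Ico_add_one_right_eq_Icc, sum_Ico_eq_sum_range,
    show (n + 2 + 1) / 2 + 1 - 2 = (n + 1) / 2 by omega, Nat.add_sub_cancel,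
    ← Nat.sum_range_choose_two_mul_of_le (m := (n + 1) / 2) (by omega), sum_range_succ',
    mul_zero, Nat.choose_zero_right, add_comm]
  simp only [Nat.add_sub_cancel_left]
end

section
/- Fix integers 1 ≤ j ≤ k. In R = ℂ[a,c,x,y], let I_j be the ideal generated by a·y^{k−j} − x^j, c·x^{j−1} − y^{k−j+1} and a·c − x·y, let K be the ideal generated by finitely many monomials x^{α₁}y^{β₁}, …, x^{α_s}y^{β_s} in the variables x, y, and let 𝔞 = (a, c). Then for every index i: x^{α_i+1}·y^{β_i+1} ∈ (K ⊓ I_j) + 𝔞, x^{α_i}·y^{β_i+k} ∈ (K ⊓ I_j) + 𝔞, and x^{α_i+k}·y^{β_i} ∈ (K ⊓ I_j) + 𝔞. (These are the membership relations used to prove that all skew Ferrers diagrams of the toric fibers of the sheaf attached to a chamber stair are substairs of that chamber stair.) -/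
open MvPolynomial

/-- The polynomial ring `R = ℂ[a,c,x,y]`. -/
abbrev R4 : Type := MvPolynomial (Fin 4) ℂ

/-- The variable `a` of `ℂ[a,c,x,y]`. -/
noncomputable def va : R4 := X 0
/-- The variable `c` of `ℂ[a,c,x,y]`. -/
noncomputable def vc : R4 := X 1
/-- The variable `x` of `ℂ[a,c,x,y]`. -/
noncomputable def vx : R4 := X 2
/-- The variable `y` of `ℂ[a,c,x,y]`. -/
noncomputable def vy : R4 := X 3

/-- The ideal `I_j = (a·y^{k-j} − x^j, c·x^{j-1} − y^{k-j+1}, a·c − x·y)` of `ℂ[a,c,x,y]`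
cutting out the fiber product `U_j ×_{𝔸²/G} 𝔸²` over the `j`-th toric chart of the minimal
resolution of the `A_{k-1}` singularity. -/
noncomputable def Ij (k j : ℕ) : Ideal R4 :=
  Ideal.span {va * vy ^ (k - j) - vx ^ j, vc * vx ^ (j - 1) - vy ^ (k - j + 1),
    va * vc - vx * vy}

/-- The ideal generated by the monomials `x^{α i}·y^{β i}` for `i : Fin s`. -/
noncomputable def Kmon (s : ℕ) (α β : Fin s → ℕ) : Ideal R4 :=
  Ideal.span { m | ∃ i : Fin s, m = vx ^ (α i) * vy ^ (β i) }

/-- Fix `1 ≤ j ≤ k`, and let `K` be the ideal of `ℂ[a,c,x,y]` generated by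
monomials `x^{α_i}y^{β_i}` (`i = 1, …, s`), `I_j` as above and `𝔞 = (a, c)`.  Then for every
index `i`: `x^{α_i+1}y^{β_i+1}`, `x^{α_i}y^{β_i+k}` and `x^{α_i+k}y^{β_i}` all belong to
`(K ⊓ I_j) + 𝔞`. -/
theorem stmt14 (k j : ℕ) (hj1 : 1 ≤ j) (hjk : j ≤ k) (s : ℕ) (α β : Fin s → ℕ) (i : Fin s) :
    vx ^ (α i + 1) * vy ^ (β i + 1) ∈ (Kmon s α β ⊓ Ij k j) + Ideal.span {va, vc} ∧
    vx ^ (α i) * vy ^ (β i + k) ∈ (Kmon s α β ⊓ Ij k j) + Ideal.span {va, vc} ∧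
    vx ^ (α i + k) * vy ^ (β i) ∈ (Kmon s α β ⊓ Ij k j) + Ideal.span {va, vc} := by
  obtain ⟨p, rfl⟩ : ∃ p, j = p + 1 := ⟨j - 1, by omega⟩
  obtain ⟨m, rfl⟩ : ∃ m, k = p + 1 + m := ⟨k - (p + 1), by omega⟩
  simp only [Ij, Nat.add_sub_cancel_left, Nat.add_sub_cancel]
  have hA : vx ^ (α i) * vy ^ (β i) ∈ Kmon s α β := Ideal.subset_span ⟨i, rfl⟩
  set G : Set R4 :=
    {va * vy ^ m - vx ^ (p + 1), vc * vx ^ p - vy ^ (m + 1), va * vc - vx * vy} with hG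
  have hg1 : va * vy ^ m - vx ^ (p + 1) ∈ Ideal.span G := Ideal.subset_span (by simp [hG])
  have hg2 : vc * vx ^ p - vy ^ (m + 1) ∈ Ideal.span G := Ideal.subset_span (by simp [hG])
  have hg3 : va * vc - vx * vy ∈ Ideal.span G := Ideal.subset_span (by simp [hG])
  have hva : va ∈ Ideal.span ({va, vc} : Set R4) := Ideal.subset_span (by simp)
  have hvc : vc ∈ Ideal.span ({va, vc} : Set R4) := Ideal.subset_span (by simp)
  refine ⟨?_, ?_, ?_⟩
  · have e : vx ^ (α i + 1) * vy ^ (β i + 1)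
        = -(vx ^ (α i) * vy ^ (β i) * (va * vc - vx * vy))
          + (vx ^ (α i) * vy ^ (β i) * vc) * va := by ring
    rw [e, Submodule.add_eq_sup]
    exact Submodule.add_mem _
      (Ideal.mem_sup_left (Submodule.mem_inf.mpr
        ⟨neg_mem (Ideal.mul_mem_right _ _ hA),
         neg_mem (Ideal.mul_mem_left _ _ hg3)⟩))
      (Ideal.mem_sup_right (Ideal.mul_mem_left _ _ hva))
  · have e : vx ^ (α i) * vy ^ (β i + (p + 1 + m))
        = -(vx ^ (α i) * vy ^ (β i) * (vy ^ p * (vc * vx ^ p - vy ^ (m + 1))))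
          + (vx ^ (α i + p) * vy ^ (β i + p)) * vc := by ring
    rw [e, Submodule.add_eq_sup]
    exact Submodule.add_mem _
      (Ideal.mem_sup_left (Submodule.mem_inf.mpr
        ⟨neg_mem (Ideal.mul_mem_right _ _ hA),
         neg_mem (Ideal.mul_mem_left _ _ (Ideal.mul_mem_left _ _ hg2))⟩))
      (Ideal.mem_sup_right (Ideal.mul_mem_left _ _ hvc))
  · have e : vx ^ (α i + (p + 1 + m)) * vy ^ (β i)
        = -(vx ^ (α i) * vy ^ (β i) * (vx ^ m * (va * vy ^ m - vx ^ (p + 1))))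
          + (vx ^ (α i + m) * vy ^ (β i + m)) * va := by ring
    rw [e, Submodule.add_eq_sup]
    exact Submodule.add_mem _
      (Ideal.mem_sup_left (Submodule.mem_inf.mpr
        ⟨neg_mem (Ideal.mul_mem_right _ _ hA),
         neg_mem (Ideal.mul_mem_left _ _ (Ideal.mul_mem_left _ _ hg1))⟩))
      (Ideal.mem_sup_right (Ideal.mul_mem_left _ _ hva))
end

section
/- Fix integers k ≥ 1 and s ≥ 2, and let x^{α₁}y^{β₁}, …, x^{α_s}y^{β_s} be monomials whose exponents satisfy β₁ > β₂ > … > β_s ≥ 0 and α_{i+1} ≤ α_i + k − 1 for all 1 ≤ i ≤ s−1 (as holds for the ordered generators of a chamber stair). In R = ℂ[a,c,x,y], let K be the ideal generated by these monomials and let I_k be the ideal generated by a − x^k, c·x^{k−1} − y and a·c − x·y. Then for every 1 ≤ i ≤ s−1, x^{α_i}·y^{β_i} ∈ (K ⊓ I_k) + (c). (This is the key membership, from the Remark on fibers over the origins of the extremal charts, used to show that over the origin of the last toric chart only the submodule generated by the last generator x^{α_s}y^{β_s} survives in the fiber of the tautological bundle.) -/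
open MvPolynomial

/-- Fix `k ≥ 1`, `s ≥ 2` and monomials `x^{α_i}y^{β_i}` (indexed here by
`i = 0, …, s-1`) with `β` strictly decreasing and `α_{i+1} ≤ α_i + k - 1` for consecutive
indices, as holds for the ordered generators of a chamber stair.  Let `K` be the ideal they
generate in `ℂ[a,c,x,y]` and let `I_k = (a − x^k, c·x^{k-1} − y, a·c − x·y)`.  Then every
generator but the last satisfies `x^{α_i}y^{β_i} ∈ (K ⊓ I_k) + (c)`. -/
theorem stmt15 (k : ℕ) (hk : 1 ≤ k) (s : ℕ) (hs : 2 ≤ s) (α β : ℕ → ℕ)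
    (hβ : ∀ i : ℕ, i + 1 < s → β (i + 1) < β i)
    (hα : ∀ i : ℕ, i + 1 < s → α (i + 1) ≤ α i + k - 1) :
    ∀ i : ℕ, i + 1 < s →
      vx ^ (α i) * vy ^ (β i) ∈
        (Ideal.span { m : R4 | ∃ i' : ℕ, i' < s ∧ m = vx ^ (α i') * vy ^ (β i') } ⊓
            Ideal.span {va - vx ^ k, vc * vx ^ (k - 1) - vy, va * vc - vx * vy}) +
          Ideal.span {vc} := by
  intro i hi
  set K : Ideal R4 :=
    Ideal.span { m : R4 | ∃ i' : ℕ, i' < s ∧ m = vx ^ (α i') * vy ^ (β i') } with hK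
  set I : Ideal R4 :=
    Ideal.span ({va - vx ^ k, vc * vx ^ (k - 1) - vy, va * vc - vx * vy} : Set R4) with hI
  have hβ1 : 1 ≤ β i := Nat.lt_of_le_of_lt (Nat.zero_le _) (hβ i hi)
  -- the auxiliary element
  set t : R4 := vx ^ (α i) * vy ^ (β i - 1) * (vy - vc * vx ^ (k - 1)) with ht
  -- key algebraic identity
  have hid : vx ^ (α i) * vy ^ (β i) = t + vc * (vx ^ (α i + k - 1) * vy ^ (β i - 1)) := by
    have e1 : β i = (β i - 1) + 1 := (Nat.succ_pred_eq_of_pos hβ1).symm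
    have e2 : α i + k - 1 = α i + (k - 1) := by omega
    rw [ht, e2, pow_add]
    nth_rewrite 1 [e1]
    ring
  -- t ∈ K
  have htK : t ∈ K := by
    have h1 : vx ^ (α i) * vy ^ (β i) ∈ K :=
      Ideal.subset_span ⟨i, Nat.lt_of_succ_lt hi, rfl⟩
    have h2 : vx ^ (α i + k - 1) * vy ^ (β i - 1) ∈ K := by
      have hd : vx ^ (α (i + 1)) * vy ^ (β (i + 1)) ∣
          vx ^ (α i + k - 1) * vy ^ (β i - 1) :=
        mul_dvd_mul (pow_dvd_pow _ (hα i hi))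
          (pow_dvd_pow _ (Nat.le_sub_one_of_lt (hβ i hi)))
      obtain ⟨q, hq⟩ := hd
      rw [hq]
      exact Ideal.mul_mem_right q K (Ideal.subset_span ⟨i + 1, hi, rfl⟩)
    have : t = vx ^ (α i) * vy ^ (β i) - vc * (vx ^ (α i + k - 1) * vy ^ (β i - 1)) := by
      rw [hid]; ring
    rw [this]
    exact Ideal.sub_mem K h1 (Ideal.mul_mem_left K vc h2)
  -- t ∈ I
  have htI : t ∈ I := by
    have hg : vc * vx ^ (k - 1) - vy ∈ I := by
      apply Ideal.subset_span; simp
    have : t = (-(vx ^ (α i) * vy ^ (β i - 1))) * (vc * vx ^ (k - 1) - vy) := by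
      rw [ht]; ring
    rw [this]
    exact Ideal.mul_mem_left I _ hg
  have hc : vc * (vx ^ (α i + k - 1) * vy ^ (β i - 1)) ∈ Ideal.span ({vc} : Set R4) :=
    Ideal.mul_mem_right _ _ (Ideal.subset_span rfl)
  rw [hid]
  exact Submodule.add_mem_sup (Ideal.mem_inf.mpr ⟨htK, htI⟩) hc
end
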